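/- Let ε ∈ (0, T], let X be an ℝ^d-valued random variable whose law has density ℓ with respect to Lebesgue measure with ‖ℓ‖_∞ < ∞, let Z be an ℝ^d-valued Gaussian random variable with mean 0 and covariance matrix 2ε·I_d, independent of X, and let h : ℝ^d → ℝ^d be Borel measurable with sup_x |h(x)| ≤ C·ε. Set Y := X + h(X) + Z. Then there exists a constant c ≥ 1 (depending only on d, T, C) such that the law of Y satisfies P(Y ∈ A) ≤ c · ‖ℓ‖_∞ · λ(A) for every Borel set A ⊆ ℝ^d, where λ is Lebesgue measure; equivalently, Y has a density whose essential supremum is at most c · ‖ℓ‖_∞. -/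

import Mathlib

/-!
Conditioning on `X = x`, `Y` has density `p_ε(· - x - h x)`. Since `|u|² ≤ 2|u - v|² + 2|v|²`,
a Gaussian shifted by `|v| ≤ Cε` is dominated by the Gaussian of doubled variance centred at the
origin: `p_ε(u - v) ≤ 2^{d/2} e^{C²T/4} p_{2ε}(u)`. Integrating against the law of `X`, whose
density is at most `‖ℓ‖_∞`, and using that `p_{2ε}` has mass one gives
`P(Y ∈ A) ≤ 2^{d/2} e^{C²T/4} ‖ℓ‖_∞ λ(A)`.
-/

open MeasureTheory ProbabilityTheory Real ENNReal

/-- The Gaussian heat kernel `p_t(x) = (4πt)^(-d/2) exp(-|x|²/(4t))`.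
Note that the centered Gaussian law with covariance matrix `2ε I_d` has density
`p_ε` with respect to Lebesgue measure. -/
noncomputable def heatKernel (d : ℕ) (t : ℝ) (x : EuclideanSpace ℝ (Fin d)) : ℝ :=
  (4 * Real.pi * t) ^ (-(d : ℝ) / 2) * Real.exp (-‖x‖ ^ 2 / (4 * t))

section HeatKernel

variable {d : ℕ} {t : ℝ}

theorem heatKernel_nonneg (ht : 0 < t) (x : EuclideanSpace ℝ (Fin d)) :
    0 ≤ heatKernel d t x := by
  unfold heatKernel; positivity

theorem continuous_heatKernel : Continuous (heatKernel d t) := by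
  unfold heatKernel; fun_prop

theorem heatKernel_eq_mul_exp_neg_mul_sq (x : EuclideanSpace ℝ (Fin d)) :
    heatKernel d t x = (4 * π * t) ^ (-(d : ℝ) / 2) * rexp (-(1 / (4 * t)) * ‖x‖ ^ 2) := by
  rw [heatKernel]
  congr 2
  ring

theorem lintegral_heatKernel (ht : 0 < t) :
    ∫⁻ x, ENNReal.ofReal (heatKernel d t x) = 1 := by
  have hb : 0 < 1 / (4 * t) := by positivity
  have hgauss := GaussianFourier.integral_rexp_neg_mul_sq_norm
    (V := EuclideanSpace ℝ (Fin d)) hb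
  rw [finrank_euclideanSpace_fin, div_div_eq_mul_div, div_one,
    show π * (4 * t) = 4 * π * t by ring] at hgauss
  have hint : Integrable fun x : EuclideanSpace ℝ (Fin d) =>
      rexp (-(1 / (4 * t)) * ‖x‖ ^ 2) :=
    .of_integral_ne_zero (by rw [hgauss]; positivity)
  simp_rw [heatKernel_eq_mul_exp_neg_mul_sq]
  rw [← ofReal_integral_eq_lintegral_ofReal (hint.const_mul _)
      (.of_forall fun _ => by positivity),
    integral_const_mul, hgauss, ← Real.rpow_add (by positivity),
    neg_div, neg_add_cancel, Real.rpow_zero, ENNReal.ofReal_one]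

theorem heatKernel_sub_le (ht : 0 < t) (u v : EuclideanSpace ℝ (Fin d)) :
    heatKernel d t (u - v) ≤
      2 ^ ((d : ℝ) / 2) * rexp (‖v‖ ^ 2 / (4 * t)) * heatKernel d (2 * t) u := by
  have hcoef : (4 * π * t) ^ (-(d : ℝ) / 2) =
      2 ^ ((d : ℝ) / 2) * (4 * π * (2 * t)) ^ (-(d : ℝ) / 2) := by
    rw [show 4 * π * (2 * t) = 2 * (4 * π * t) by ring,
      Real.mul_rpow zero_le_two (by positivity : 0 ≤ 4 * π * t), ← mul_assoc,
      ← Real.rpow_add two_pos, neg_div, add_neg_cancel, Real.rpow_zero, one_mul]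
  have hnorm : ‖u‖ ^ 2 ≤ 2 * ‖u - v‖ ^ 2 + 2 * ‖v‖ ^ 2 := by
    have := pow_le_pow_left₀ (norm_nonneg u) (norm_le_norm_sub_add u v) 2
    nlinarith [sq_nonneg (‖u - v‖ - ‖v‖)]
  have hexp : -‖u - v‖ ^ 2 / (4 * t) ≤ ‖v‖ ^ 2 / (4 * t) + -‖u‖ ^ 2 / (4 * (2 * t)) := by
    have hgap : ‖v‖ ^ 2 / (4 * t) + -‖u‖ ^ 2 / (4 * (2 * t)) - -‖u - v‖ ^ 2 / (4 * t) =
        (2 * ‖u - v‖ ^ 2 + 2 * ‖v‖ ^ 2 - ‖u‖ ^ 2) / (8 * t) := by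
      field_simp
      ring
    have hgap_nonneg : 0 ≤ (2 * ‖u - v‖ ^ 2 + 2 * ‖v‖ ^ 2 - ‖u‖ ^ 2) / (8 * t) :=
      div_nonneg (by linarith) (by positivity)
    linarith
  rw [heatKernel, heatKernel, hcoef]
  calc _ ≤ 2 ^ ((d : ℝ) / 2) * (4 * π * (2 * t)) ^ (-(d : ℝ) / 2) *
        rexp (‖v‖ ^ 2 / (4 * t) + -‖u‖ ^ 2 / (4 * (2 * t))) := by gcongr
    _ = _ := by rw [Real.exp_add]; ring

theorem heatKernel_sub_le_of_norm_le {T C : ℝ} (ht : 0 < t) (htT : t ≤ T)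
    (u : EuclideanSpace ℝ (Fin d)) {v : EuclideanSpace ℝ (Fin d)} (hv : ‖v‖ ≤ C * t) :
    heatKernel d t (u - v) ≤
      2 ^ ((d : ℝ) / 2) * rexp (C ^ 2 * T / 4) * heatKernel d (2 * t) u := by
  have hv2 : ‖v‖ ^ 2 / (4 * t) ≤ C ^ 2 * T / 4 := by
    have := pow_le_pow_left₀ (norm_nonneg v) hv 2
    rw [div_le_iff₀ (by positivity)]
    nlinarith [mul_le_mul_of_nonneg_left htT (by positivity : 0 ≤ C ^ 2 * t)]
  have hu := heatKernel_nonneg (d := d) (by positivity : 0 < 2 * t) u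
  refine (heatKernel_sub_le ht u v).trans ?_
  gcongr

end HeatKernel

section AddCommGroup

variable {G : Type*} [AddCommGroup G] [MeasurableSpace G] [MeasurableAdd₂ G] [MeasurableNeg G]

theorem lintegral_withDensity_setLIntegral_sub_le (ν : Measure G) [SFinite ν]
    [ν.IsAddLeftInvariant] [ν.IsNegInvariant] {f q : G → ℝ≥0∞} (hf : Measurable f)
    (hq : Measurable q) (hq1 : ∫⁻ z, q z ∂ν = 1) (A : Set G) :
    ∫⁻ x, ∫⁻ y in A, q (y - x) ∂ν ∂ν.withDensity f ≤ essSup f ν * ν A := by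
  have hmeas : Measurable (Function.uncurry fun x y : G => q (y - x)) :=
    hq.comp (measurable_snd.sub measurable_fst)
  have hswap : ∫⁻ x, ∫⁻ y in A, q (y - x) ∂ν ∂ν = ν A := by
    rw [lintegral_lintegral_swap hmeas.aemeasurable]
    simp_rw [(Measure.measurePreserving_sub_left ν _).lintegral_comp hq, hq1, setLIntegral_one]
  calc ∫⁻ x, ∫⁻ y in A, q (y - x) ∂ν ∂ν.withDensity f
      ≤ ∫⁻ x, f x * ∫⁻ y in A, q (y - x) ∂ν ∂ν :=
        lintegral_withDensity_le_lintegral_mul ν hf _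
    _ ≤ ∫⁻ x, essSup f ν * ∫⁻ y in A, q (y - x) ∂ν ∂ν := by
        refine lintegral_mono_ae ?_
        filter_upwards [ae_le_essSup f] with x hx
        exact mul_le_mul_left hx _
    _ = essSup f ν * ν A := by
        rw [lintegral_const_mul _ hmeas.lintegral_prod_right, hswap]

end AddCommGroup

namespace ProbabilityTheory

variable {Ω α G : Type*} [MeasurableSpace Ω] [MeasurableSpace α]
  [AddCommGroup G] [MeasurableSpace G] [MeasurableAdd₂ G]

theorem IndepFun.map_add_apply_eq_lintegral {P : Measure Ω} [IsFiniteMeasure P]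
    {X : Ω → α} {Z : Ω → G} (hX : Measurable X) (hZ : Measurable Z) (hXZ : IndepFun X Z P)
    {g : α → G} (hg : Measurable g) {ν : Measure G} [ν.IsAddLeftInvariant] {q : G → ℝ≥0∞}
    (hZq : P.map Z = ν.withDensity q) {A : Set G} (hA : MeasurableSet A) :
    P.map (fun ω => g (X ω) + Z ω) A = ∫⁻ x, ∫⁻ y in A, q (y - g x) ∂ν ∂P.map X := by
  have hF : Measurable fun p : α × G => g p.1 + p.2 :=
    (hg.comp measurable_fst).add measurable_snd
  have hlaw : P.map (fun ω => g (X ω) + Z ω) = ((P.map X).prod (P.map Z)).map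
      fun p : α × G => g p.1 + p.2 := by
    rw [← (indepFun_iff_map_prod_eq_prod_map_map hX.aemeasurable hZ.aemeasurable).mp hXZ,
      Measure.map_map hF (hX.prodMk hZ)]
    rfl
  rw [hlaw, Measure.map_apply hF hA, Measure.prod_apply (hF hA)]
  refine lintegral_congr fun x => ?_
  have hshift : MeasurableSet ((g x + ·) ⁻¹' A) := measurable_const_add _ hA
  rw [Set.preimage_preimage, hZq, withDensity_apply _ hshift,
    ← (measurePreserving_add_left ν (g x)).setLIntegral_comp_preimage_emb
      (measurableEmbedding_addLeft (g x)) (fun y => q (y - g x)) A]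
  simp only [add_sub_cancel_left]

end ProbabilityTheory

theorem stmt_11_general (d : ℕ) {Ω : Type*} [MeasurableSpace Ω] (P : Measure Ω)
    [IsProbabilityMeasure P] (T C : ℝ) (hT : 0 < T) :
    ∃ c : ℝ, 1 ≤ c ∧
      ∀ (ε : ℝ), 0 < ε → ε ≤ T →
      ∀ (X Z : Ω → EuclideanSpace ℝ (Fin d)), Measurable X → Measurable Z →
      ∀ ℓ : EuclideanSpace ℝ (Fin d) → ℝ, Measurable ℓ → (∀ x, 0 ≤ ℓ x) →
      -- `‖ℓ‖_∞ < ∞`: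
      essSup (fun x => ENNReal.ofReal (ℓ x))
        (volume : Measure (EuclideanSpace ℝ (Fin d))) < ⊤ →
      -- the law of `X` has density `ℓ` w.r.t. Lebesgue measure:
      P.map X = volume.withDensity (fun x => ENNReal.ofReal (ℓ x)) →
      -- `Z` is Gaussian with mean `0` and covariance matrix `2ε I_d`,
      -- i.e. its law has density `p_ε` w.r.t. Lebesgue measure:
      P.map Z = volume.withDensity (fun z => ENNReal.ofReal (heatKernel d ε z)) →
      IndepFun X Z P →
      ∀ h : EuclideanSpace ℝ (Fin d) → EuclideanSpace ℝ (Fin d), Measurable h →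
      (∀ x, ‖h x‖ ≤ C * ε) →
      ∀ A : Set (EuclideanSpace ℝ (Fin d)), MeasurableSet A →
        P.map (fun ω => X ω + h (X ω) + Z ω) A ≤
          ENNReal.ofReal c *
            essSup (fun x => ENNReal.ofReal (ℓ x))
              (volume : Measure (EuclideanSpace ℝ (Fin d))) * volume A := by
  set c : ℝ := 2 ^ ((d : ℝ) / 2) * rexp (C ^ 2 * T / 4)
  refine ⟨c, one_le_mul_of_one_le_of_one_le (Real.one_le_rpow one_le_two (by positivity))
    (Real.one_le_exp (by positivity)), ?_⟩
  intro ε hε hεT X Z hX hZ ℓ hℓ _ _ hXℓ hZε hXZ h hh hhε A hA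
  have hkernel : ∀ x y, ENNReal.ofReal (heatKernel d ε (y - (x + h x))) ≤
      ENNReal.ofReal c * ENNReal.ofReal (heatKernel d (2 * ε) (y - x)) := fun x y => by
    rw [← ENNReal.ofReal_mul (by positivity), sub_add_eq_sub_sub]
    exact ENNReal.ofReal_le_ofReal (heatKernel_sub_le_of_norm_le hε hεT _ (hhε x))
  calc P.map (fun ω => X ω + h (X ω) + Z ω) A
      = ∫⁻ x, ∫⁻ y in A, ENNReal.ofReal (heatKernel d ε (y - (x + h x))) ∂volume ∂P.map X :=
        hXZ.map_add_apply_eq_lintegral hX hZ (g := fun x => x + h x) (measurable_id.add hh)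
          hZε hA
    _ ≤ ∫⁻ x, ENNReal.ofReal c * ∫⁻ y in A, ENNReal.ofReal (heatKernel d (2 * ε) (y - x))
          ∂volume ∂P.map X :=
        lintegral_mono fun x => (lintegral_mono fun y => hkernel x y).trans_eq
          (lintegral_const_mul' _ _ ofReal_ne_top)
    _ = ENNReal.ofReal c * ∫⁻ x, ∫⁻ y in A, ENNReal.ofReal (heatKernel d (2 * ε) (y - x))
          ∂volume ∂volume.withDensity fun x => ENNReal.ofReal (ℓ x) := by
        rw [lintegral_const_mul' _ _ ofReal_ne_top, hXℓ]
    _ ≤ ENNReal.ofReal c * (essSup (fun x => ENNReal.ofReal (ℓ x)) volume * volume A) := by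
        gcongr
        exact lintegral_withDensity_setLIntegral_sub_le volume hℓ.ennreal_ofReal
          continuous_heatKernel.measurable.ennreal_ofReal
          (lintegral_heatKernel (t := 2 * ε) (by positivity)) A
    _ = _ := (mul_assoc _ _ _).symm

theorem stmt_11 (d : ℕ) {Ω : Type*} [MeasurableSpace Ω] (P : Measure Ω)
    [IsProbabilityMeasure P] (T C : ℝ) (hT : 0 < T) (hC : 0 < C) :
    ∃ c : ℝ, 1 ≤ c ∧
      ∀ (ε : ℝ), 0 < ε → ε ≤ T →
      ∀ (X Z : Ω → EuclideanSpace ℝ (Fin d)), Measurable X → Measurable Z →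
      ∀ ℓ : EuclideanSpace ℝ (Fin d) → ℝ, Measurable ℓ → (∀ x, 0 ≤ ℓ x) →
      -- `‖ℓ‖_∞ < ∞`:
      essSup (fun x => ENNReal.ofReal (ℓ x))
        (volume : Measure (EuclideanSpace ℝ (Fin d))) < ⊤ →
      -- the law of `X` has density `ℓ` w.r.t. Lebesgue measure:
      P.map X = volume.withDensity (fun x => ENNReal.ofReal (ℓ x)) →
      -- `Z` is Gaussian with mean `0` and covariance matrix `2ε I_d`,
      -- i.e. its law has density `p_ε` w.r.t. Lebesgue measure:
      P.map Z = volume.withDensity (fun z => ENNReal.ofReal (heatKernel d ε z)) →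
      IndepFun X Z P →
      ∀ h : EuclideanSpace ℝ (Fin d) → EuclideanSpace ℝ (Fin d), Measurable h →
      (∀ x, ‖h x‖ ≤ C * ε) →
      ∀ A : Set (EuclideanSpace ℝ (Fin d)), MeasurableSet A →
        P.map (fun ω => X ω + h (X ω) + Z ω) A ≤
          ENNReal.ofReal c *
            essSup (fun x => ENNReal.ofReal (ℓ x))
              (volume : Measure (EuclideanSpace ℝ (Fin d))) * volume A :=
  stmt_11_general d P T C hT
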